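/- Let E be a de Branges function, let N be a nearly invariant subspace of H(E) with no common zeros, let k_N be the reproducing kernel of N, and let α ∈ ℂ with Im α ≠ 0, so that k_N(α, α) ≠ 0. Then for every λ ∈ ℂ with λ ≠ conj α, the function h_λ(z) := ((z − conj α)/(z − α))·( k_N(λ, z) − (k_N(λ, α)/k_N(α, α))·k_N(α, z) ) extends to an entire function belonging to N, and for every f ∈ N with f(conj α) = 0 one has ⟨ f , h_λ ⟩_{H(E)} = ((λ − α)/(λ − conj α))·f(λ). -/

import Mathlib

open Complex MeasureTheory Filter ComplexConjugate
open scoped ENNReal Topology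

noncomputable section

/-- For an entire function `f`, `fStar f z = conj (f (conj z))`. -/
def fStar (f : ℂ → ℂ) : ℂ → ℂ := fun z => conj (f (conj z))

/-- A de Branges function: an entire function `E` with `|E(z)| > |E*(z)|` in the
upper half-plane. -/
def IsDeBrangesFunction (E : ℂ → ℂ) : Prop :=
  Differentiable ℂ E ∧ ∀ z : ℂ, 0 < z.im → ‖fStar E z‖ < ‖E z‖

/-- Membership in the Hardy space `H²(ℂ⁺)`: holomorphic on the upper half-plane with
uniformly bounded `L²`-means on horizontal lines. -/
def MemHardyH2 (g : ℂ → ℂ) : Prop :=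
  DifferentiableOn ℂ g {z : ℂ | 0 < z.im} ∧
  ∃ C : ℝ≥0∞, C < ⊤ ∧ ∀ y : ℝ, 0 < y →
    (∫⁻ x : ℝ, (‖g (x + y * Complex.I)‖₊ : ℝ≥0∞) ^ 2) ≤ C

/-- The de Branges space `H(E)` as a set of entire functions. -/
def deBrangesSpace (E : ℂ → ℂ) : Set (ℂ → ℂ) :=
  {f | Differentiable ℂ f ∧ MemHardyH2 (fun z => f z / E z) ∧
       MemHardyH2 (fun z => fStar f z / E z) ∧
       (∫⁻ x : ℝ, (‖f x / E x‖₊ : ℝ≥0∞) ^ 2) < ⊤}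

/-- The norm of `H(E)`: `‖f‖ = (∫_ℝ |f/E|² dx)^{1/2}`. -/
def dbNorm (E f : ℂ → ℂ) : ℝ := Real.sqrt (∫ x : ℝ, ‖f x / E x‖ ^ 2)

/-- The inner product of `H(E)`: `⟨f,g⟩ = ∫_ℝ f(x) conj (g x) |E(x)|⁻² dx`. -/
def dbInner (E f g : ℂ → ℂ) : ℂ :=
  ∫ x : ℝ, f x * conj (g x) * (((‖E x‖ ^ 2 : ℝ) : ℂ))⁻¹

/-- `N` is a nearly invariant subspace of `H(E)` with no common zeros:
a norm-closed linear subspace of `H(E)` whose elements have no common zero, in which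
zeros may be divided out. -/
def IsNearlyInvariantNoCommonZeros (E : ℂ → ℂ) (N : Set (ℂ → ℂ)) : Prop :=
  N ⊆ deBrangesSpace E ∧
  (fun _ => (0 : ℂ)) ∈ N ∧
  (∀ f ∈ N, ∀ g ∈ N, (fun z => f z + g z) ∈ N) ∧
  (∀ c : ℂ, ∀ f ∈ N, (fun z => c * f z) ∈ N) ∧
  (∀ f ∈ deBrangesSpace E,
    (∀ ε : ℝ, 0 < ε → ∃ g ∈ N, dbNorm E (fun z => f z - g z) < ε) → f ∈ N) ∧
  (∀ lam : ℂ, ∃ f ∈ N, f lam ≠ 0) ∧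
  (∀ f ∈ N, ∀ lam : ℂ, f lam = 0 → ∀ g : ℂ → ℂ, Differentiable ℂ g →
    (∀ z : ℂ, z ≠ lam → g z = f z / (z - lam)) → g ∈ N)

/-- `k` is the reproducing kernel of `N ⊆ H(E)`. -/
def IsReproducingKernel (E : ℂ → ℂ) (N : Set (ℂ → ℂ)) (k : ℂ → ℂ → ℂ) : Prop :=
  ∀ lam : ℂ, (fun z => k lam z) ∈ N ∧ ∀ f ∈ N, dbInner E f (fun z => k lam z) = f lam

/-! The function `g = k_λ - (k_λ(α) / k_α(α)) k_α` vanishes at `α`, so near invariance puts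
`h = (z - conj α) g / (z - α)` in `N`. For `f ∈ N` with `f (conj α) = 0`, the factors
`(z - conj α)` in `f` and `h` can be traded on the real line for `(z - α)`, turning `⟨f, h⟩` into
`⟨f̃, g⟩` with `f̃ = (z - α) f / (z - conj α) ∈ N`; the reproducing property evaluates this as
`f̃(λ)` because `f̃(α) = 0`. Finally `k_α(α) = ‖k_α‖² ≠ 0`, since otherwise every `f ∈ N` would
vanish at `α`. -/

theorem Differentiable.dslope {F : Type*} [NormedAddCommGroup F] [NormedSpace ℂ F]
    [CompleteSpace F] {f : ℂ → F} (hf : Differentiable ℂ f) (a : ℂ) :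
    Differentiable ℂ (dslope f a) :=
  differentiableOn_univ.mp ((differentiableOn_dslope Filter.univ_mem).mpr hf.differentiableOn)

theorem sub_mul_dslope_of_eq_zero {𝕜 : Type*} [NontriviallyNormedField 𝕜] {f : 𝕜 → 𝕜} {a : 𝕜}
    (ha : f a = 0) (z : 𝕜) : (z - a) * dslope f a z = f z := by
  simpa [ha] using sub_smul_dslope f a z

theorem dbInner_eq_integral_div_mul_conj_div (E f g : ℂ → ℂ) :
    dbInner E f g = ∫ x : ℝ, f x / E x * conj (g x / E x) := by
  unfold dbInner
  congr 1; funext x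
  rw [map_div₀, div_mul_div_comm, Complex.mul_conj, Complex.normSq_eq_norm_sq, div_eq_mul_inv]

theorem dbInner_self (E f : ℂ → ℂ) : dbInner E f f = ((∫ x : ℝ, ‖f x / E x‖ ^ 2 : ℝ) : ℂ) := by
  rw [dbInner_eq_integral_div_mul_conj_div, ← integral_complex_ofReal]
  congr 1; funext x
  rw [Complex.mul_conj, Complex.normSq_eq_norm_sq]

theorem memLp_div_of_mem_deBrangesSpace {E f : ℂ → ℂ} (hE : Measurable fun x : ℝ => E x)
    (hf : f ∈ deBrangesSpace E) : MemLp (fun x : ℝ => f x / E x) 2 := by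
  refine ⟨((hf.1.continuous.comp continuous_ofReal).measurable.div hE).aestronglyMeasurable, ?_⟩
  rw [eLpNorm_lt_top_iff_lintegral_rpow_enorm_lt_top two_ne_zero ENNReal.ofNat_ne_top]
  simpa [enorm_eq_nnnorm] using hf.2.2.2

theorem integrable_div_mul_conj_div {E f g : ℂ → ℂ} (hE : Measurable fun x : ℝ => E x)
    (hf : f ∈ deBrangesSpace E) (hg : g ∈ deBrangesSpace E) :
    Integrable fun x : ℝ => f x / E x * conj (g x / E x) :=
  (memLp_div_of_mem_deBrangesSpace hE hf).integrable_mul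
    (memLp_div_of_mem_deBrangesSpace hE hg).star

theorem dbInner_sub_mul_right {E f g₁ g₂ : ℂ → ℂ} (hE : Measurable fun x : ℝ => E x)
    (hf : f ∈ deBrangesSpace E) (hg₁ : g₁ ∈ deBrangesSpace E) (hg₂ : g₂ ∈ deBrangesSpace E)
    (c : ℂ) :
    dbInner E f (fun z => g₁ z - c * g₂ z) = dbInner E f g₁ - conj c * dbInner E f g₂ := by
  simp only [dbInner_eq_integral_div_mul_conj_div]
  rw [← integral_const_mul, ← integral_sub (integrable_div_mul_conj_div hE hf hg₁)
    ((integrable_div_mul_conj_div hE hf hg₂).const_mul _)]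
  congr 1; funext x
  simp only [map_div₀, map_sub, map_mul]
  ring

-- On the real line `conj (x - a) = x - conj a`, so linear factors can cross the inner product.
theorem dbInner_sub_mul_sub_mul (E u v : ℂ → ℂ) (a b : ℂ) :
    dbInner E (fun z => (z - a) * u z) (fun z => (z - b) * v z) =
      dbInner E (fun z => (z - conj b) * u z) (fun z => (z - conj a) * v z) := by
  unfold dbInner
  congr 1; funext x
  simp only [map_mul, map_sub, Complex.conj_ofReal, Complex.conj_conj]
  ring

theorem IsReproducingKernel.apply_self_ne_zero {E : ℂ → ℂ} {N : Set (ℂ → ℂ)}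
    {k : ℂ → ℂ → ℂ} (hE : Measurable fun x : ℝ => E x) (hN : N ⊆ deBrangesSpace E)
    (hk : IsReproducingKernel E N k) {a : ℂ} (ha : ∃ f ∈ N, f a ≠ 0) : k a a ≠ 0 := by
  intro hzero
  obtain ⟨f, hfN, hfa⟩ := ha
  have hka := hN (hk a).1
  have hnorm : ∫ x : ℝ, ‖k a x / E x‖ ^ 2 = 0 := by
    exact_mod_cast (dbInner_self E (k a)).symm.trans (((hk a).2 _ (hk a).1).trans hzero)
  have hae : ∀ᵐ x : ℝ, k a x / E x = 0 := by
    filter_upwards [(integral_eq_zero_iff_of_nonneg (fun x => by positivity)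
      ((memLp_div_of_mem_deBrangesSpace hE hka).integrable_norm_pow two_ne_zero)).mp hnorm]
      with x hx
    simpa using hx
  apply hfa
  rw [← (hk a).2 f hfN, dbInner_eq_integral_div_mul_conj_div]
  refine (integral_congr_ae (g := fun _ => (0 : ℂ)) ?_).trans (integral_zero ℝ ℂ)
  filter_upwards [hae] with x hx
  simp [hx]

namespace IsNearlyInvariantNoCommonZeros

variable {E : ℂ → ℂ} {N : Set (ℂ → ℂ)}

theorem sub_mul_mem (hN : IsNearlyInvariantNoCommonZeros E N) {f g : ℂ → ℂ} (hf : f ∈ N)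
    (hg : g ∈ N) (c : ℂ) :
    (fun z => f z - c * g z) ∈ N := by
  simpa only [neg_mul, ← sub_eq_add_neg] using hN.2.2.1 f hf _ (hN.2.2.2.1 (-c) g hg)

theorem dslope_mem (hN : IsNearlyInvariantNoCommonZeros E N) {f : ℂ → ℂ} (hf : f ∈ N) {a : ℂ}
    (ha : f a = 0) : dslope f a ∈ N :=
  hN.2.2.2.2.2.2 f hf a ha _ ((hN.1 hf).1.dslope a) fun z hz => by
    rw [eq_div_iff (sub_ne_zero.mpr hz), mul_comm, sub_mul_dslope_of_eq_zero ha]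

theorem sub_mul_dslope_mem (hN : IsNearlyInvariantNoCommonZeros E N) {f : ℂ → ℂ} (hf : f ∈ N)
    {a : ℂ} (ha : f a = 0) (b : ℂ) :
    (fun z => (z - b) * dslope f a z) ∈ N := by
  convert hN.sub_mul_mem hf (hN.dslope_mem hf ha) (b - a) using 2 with z
  rw [← sub_mul_dslope_of_eq_zero ha z]
  ring

end IsNearlyInvariantNoCommonZeros

theorem auxiliary_function_in_N_general
    (E : ℂ → ℂ) (hE : IsDeBrangesFunction E)
    (N : Set (ℂ → ℂ)) (hN : IsNearlyInvariantNoCommonZeros E N)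
    (k : ℂ → ℂ → ℂ) (hk : IsReproducingKernel E N k)
    (α : ℂ) (lam : ℂ) (hlam : lam ≠ conj α) :
    ∃ h : ℂ → ℂ, Differentiable ℂ h ∧ h ∈ N ∧
      (∀ z : ℂ, z ≠ α →
        h z = ((z - conj α) / (z - α)) * (k lam z - (k lam α / k α α) * k α z)) ∧
      ∀ f ∈ N, f (conj α) = 0 →
        dbInner E f h = ((lam - α) / (lam - conj α)) * f lam := by
  have hEm : Measurable fun x : ℝ => E x := (hE.1.continuous.comp continuous_ofReal).measurable
  have hkαα : k α α ≠ 0 := hk.apply_self_ne_zero hEm hN.1 (hN.2.2.2.2.2.1 α)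
  set c := k lam α / k α α
  set g : ℂ → ℂ := fun z => k lam z - c * k α z
  have hgN : g ∈ N := hN.sub_mul_mem (hk lam).1 (hk α).1 c
  have hgα : g α = 0 := by simp [g, c, hkαα]
  refine ⟨fun z => (z - conj α) * dslope g α z, ?_, hN.sub_mul_dslope_mem hgN hgα _, ?_, ?_⟩
  · exact (differentiable_id.sub_const _).mul ((hN.1 hgN).1.dslope α)
  · intro z hz
    show (z - conj α) * dslope g α z = _
    rw [dslope_of_ne _ hz, slope_def_field, hgα, sub_zero]
    ring
  · intro f hf hfα
    set f₁ := dslope f (conj α)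
    have hF : (fun z => (z - α) * f₁ z) ∈ N := hN.sub_mul_dslope_mem hf hfα α
    calc dbInner E f (fun z => (z - conj α) * dslope g α z)
        = dbInner E (fun z => (z - conj α) * f₁ z) (fun z => (z - conj α) * dslope g α z) := by
          simp only [f₁, sub_mul_dslope_of_eq_zero hfα]
      _ = dbInner E (fun z => (z - α) * f₁ z) g := by
          rw [dbInner_sub_mul_sub_mul, Complex.conj_conj]
          simp only [sub_mul_dslope_of_eq_zero hgα]
      _ = (lam - α) * f₁ lam := by
          rw [dbInner_sub_mul_right hEm (hN.1 hF) (hN.1 (hk lam).1) (hN.1 (hk α).1),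
            (hk lam).2 _ hF, (hk α).2 _ hF]
          ring
      _ = (lam - α) / (lam - conj α) * f lam := by
          have hf₁ : f lam = (lam - conj α) * f₁ lam := (sub_mul_dslope_of_eq_zero hfα lam).symm
          rw [hf₁]
          field_simp [sub_ne_zero.mpr hlam]

/-- The auxiliary function `h_λ` from the proof of the kernel structure theorem extends to
an entire function belonging to `N`, and its inner products with functions of `N`
vanishing at `conj α` are as claimed. -/
theorem auxiliary_function_in_N
    (E : ℂ → ℂ) (hE : IsDeBrangesFunction E)
    (N : Set (ℂ → ℂ)) (hN : IsNearlyInvariantNoCommonZeros E N)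
    (k : ℂ → ℂ → ℂ) (hk : IsReproducingKernel E N k)
    (α : ℂ) (hα : α.im ≠ 0) (lam : ℂ) (hlam : lam ≠ conj α) :
    ∃ h : ℂ → ℂ, Differentiable ℂ h ∧ h ∈ N ∧
      (∀ z : ℂ, z ≠ α →
        h z = ((z - conj α) / (z - α)) * (k lam z - (k lam α / k α α) * k α z)) ∧
      ∀ f ∈ N, f (conj α) = 0 →
        dbInner E f h = ((lam - α) / (lam - conj α)) * f lam :=
  auxiliary_function_in_N_general E hE N hN k hk α lam hlam
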